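/- arXiv:math/0205096 — 3 statements merged into one kernel-verified Lean document; each statement's English description precedes it below -/
import Mathlib

section
/- Let f(z) = Σ_{k=0}^∞ a_k z^k be a power series with complex coefficients converging for all z in the open unit disk, let N ∈ ℕ and B > 0 satisfy |a_k| ≤ B · max_{0≤j≤N} |a_j| for every k > N, assume a_j ≠ 0 for some j ≤ N, and let R₀ := 1/(B·2^{30N} + 1). Then for every 0 < r < R₀/2, the number of zeros of f in the closed disk {|z| ≤ r}, counted with multiplicities, is at most N. -/
/-!
Dividing out a zero `w` with `‖w‖ ≤ r ≤ 1/2` writes `f z = (z - w) g z`, where `g` has the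
coefficients `b_k = ∑ₘ a_{k+1+m} wᵐ`. Then `a₀ = -w b₀` and `a_{k+1} = b_k - w b_{k+1}`, `g` has at
most one zero fewer in the disk, and a bound `‖a_k‖ ≤ T` for `k > n` turns into `‖b_k‖ ≤ 2T` for
`k ≥ n`. By induction on `n`, if `f` has more than `n` zeros in the disk of radius `r`, then
`‖a_j‖ ≤ 2 T r 6ⁿ` for all `j ≤ n`. For `n = N` and `T = B max_{j ≤ N} ‖a_j‖` this is impossible
once `2 B r 6ᴺ < 1`.
-/

open Filter Topology Metric
open scoped Classical

/-- Order of vanishing of `f` at `z` (junk value `0` if `f` is not analytic at `z`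
or vanishes identically near `z`). -/
noncomputable def vanishingOrder (f : ℂ → ℂ) (z : ℂ) : ℕ :=
  if h : AnalyticAt ℂ f z then (analyticOrderAt f z).toNat else 0

/-- The number of zeros of `f`, counted with multiplicities, in the closed disk of radius `r`. -/
noncomputable def numZeros (f : ℂ → ℂ) (r : ℝ) : ℕ :=
  ∑ᶠ z ∈ closedBall (0 : ℂ) r, vanishingOrder f z

lemma exists_forall_norm_le_of_tail {E : Type*} [SeminormedAddGroup E] {a : ℕ → E} {n : ℕ}
    {T : ℝ} (ha : ∀ k > n, ‖a k‖ ≤ T) : ∃ C, ∀ k, ‖a k‖ ≤ C := by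
  refine ⟨max T (∑ j ∈ Finset.range (n + 1), ‖a j‖), fun k => ?_⟩
  rcases lt_or_ge n k with hk | hk
  · exact le_max_of_le_left (ha k hk)
  · exact le_max_of_le_right (Finset.single_le_sum (fun j _ => norm_nonneg (a j))
      (Finset.mem_range.2 (Nat.lt_succ_of_le hk)))

lemma norm_le_of_coeff_eq_sub_mul {R : Type*} [SeminormedRing R] {a b : ℕ → R} {w : R}
    {r K L : ℝ} (hwr : ‖w‖ ≤ r) (hL : 0 ≤ L) (h0 : a 0 = -(w * b 0))
    (hsucc : ∀ k, a (k + 1) = b k - w * b (k + 1))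
    (hK : ∀ k, ‖b k‖ ≤ K) {m : ℕ} (hbL : ∀ j < m, ‖b j‖ ≤ L) :
    ∀ j ≤ m, ‖a j‖ ≤ L + r * K := by
  have hwK : ∀ k, ‖w * b k‖ ≤ r * K := fun k =>
    (norm_mul_le w (b k)).trans <|
      mul_le_mul hwr (hK k) (norm_nonneg _) ((norm_nonneg w).trans hwr)
  rintro (_ | j) hj
  · rw [h0, norm_neg]
    linarith [hwK 0]
  · rw [hsucc]
    linarith [norm_sub_le (b j) (w * b (j + 1)), hbL j hj, hwK (j + 1)]

section Order

variable {𝕜 : Type*} [NontriviallyNormedField 𝕜] {g : 𝕜 → 𝕜} {w u : 𝕜}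

lemma analyticOrderNatAt_id_sub_const : analyticOrderNatAt (· - w) u = if u = w then 1 else 0 := by
  split_ifs with h <;> simp [analyticOrderNatAt, h]

lemma analyticOrderNatAt_id_sub_mul_of_ne_top (hg : AnalyticAt 𝕜 g u)
    (htop : analyticOrderAt g u ≠ ⊤) :
    analyticOrderNatAt ((· - w) * g) u = (if u = w then 1 else 0) + analyticOrderNatAt g u := by
  rw [analyticOrderNatAt_mul (by fun_prop) hg _ htop, analyticOrderNatAt_id_sub_const]
  by_cases h : u = w <;> simp [h]

lemma analyticOrderNatAt_le_id_sub_mul (hg : AnalyticAt 𝕜 g u) :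
    analyticOrderNatAt g u ≤ analyticOrderNatAt ((· - w) * g) u := by
  by_cases htop : analyticOrderAt g u = ⊤
  · simp [analyticOrderNatAt, htop]
  · rw [analyticOrderNatAt_id_sub_mul_of_ne_top hg htop]
    omega

lemma analyticOrderNatAt_id_sub_mul_le (hg : AnalyticAt 𝕜 g u) :
    analyticOrderNatAt ((· - w) * g) u ≤ analyticOrderNatAt g u + if u = w then 1 else 0 := by
  by_cases htop : analyticOrderAt g u = ⊤
  · simp [analyticOrderNatAt, analyticOrderAt_mul_eq_top_of_right htop]
  · rw [analyticOrderNatAt_id_sub_mul_of_ne_top hg htop]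
    omega

end Order

lemma vanishingOrder_eq_analyticOrderNatAt (f : ℂ → ℂ) (z : ℂ) :
    vanishingOrder f z = analyticOrderNatAt f z := by
  unfold vanishingOrder analyticOrderNatAt
  split_ifs with hf
  · rfl
  · simp [analyticOrderAt_of_not_analyticAt hf]

lemma exists_eq_zero_of_numZeros_ne_zero {f : ℂ → ℂ} {r : ℝ} (h : numZeros f r ≠ 0) :
    ∃ w ∈ closedBall (0 : ℂ) r, f w = 0 := by
  obtain ⟨w, hw, hne⟩ := exists_ne_zero_of_finsum_mem_ne_zero h
  rw [vanishingOrder_eq_analyticOrderNatAt] at hne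
  exact ⟨w, hw, apply_eq_zero_of_analyticOrderNatAt_ne_zero hne⟩

lemma numZeros_le_numZeros_add_one {f g : ℂ → ℂ} {w : ℂ} {r : ℝ}
    (hfg : ∀ u ∈ closedBall (0 : ℂ) r, AnalyticAt ℂ g u ∧ f =ᶠ[𝓝 u] (· - w) * g) :
    numZeros f r ≤ numZeros g r + 1 := by
  set S := closedBall (0 : ℂ) r
  have hf_le : ∀ u ∈ S, vanishingOrder f u ≤ vanishingOrder g u + if u = w then 1 else 0 := by
    intro u hu
    obtain ⟨hg, hf⟩ := hfg u hu
    simp only [vanishingOrder_eq_analyticOrderNatAt, analyticOrderNatAt, analyticOrderAt_congr hf]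
    exact analyticOrderNatAt_id_sub_mul_le hg
  have hg_le : ∀ u ∈ S, vanishingOrder g u ≤ vanishingOrder f u := by
    intro u hu
    obtain ⟨hg, hf⟩ := hfg u hu
    simp only [vanishingOrder_eq_analyticOrderNatAt, analyticOrderNatAt, analyticOrderAt_congr hf]
    exact analyticOrderNatAt_le_id_sub_mul hg
  by_cases hfin : (S ∩ Function.support (vanishingOrder f)).Finite
  swap
  · rw [numZeros, finsum_mem_eq_zero_of_infinite hfin]
    omega
  set t := hfin.toFinset
  have hf_sum : numZeros f r = ∑ u ∈ t, vanishingOrder f u :=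
    finsum_mem_eq_sum_of_inter_support_eq _ <| by
      rw [hfin.coe_toFinset, Set.inter_assoc, Set.inter_self]
  have hg_sum : numZeros g r = ∑ u ∈ t, vanishingOrder g u := by
    refine finsum_mem_eq_sum_of_inter_support_eq _ (Set.ext fun u => ?_)
    simp only [t, Set.Finite.coe_toFinset, Set.mem_inter_iff, Function.mem_support]
    constructor
    · rintro ⟨hu, hgu⟩
      exact ⟨⟨hu, fun hfu => hgu (by simpa [hfu] using hg_le u hu)⟩, hgu⟩
    · rintro ⟨⟨hu, -⟩, hgu⟩
      exact ⟨hu, hgu⟩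
  calc numZeros f r ≤ ∑ u ∈ t, (vanishingOrder g u + if u = w then 1 else 0) := by
        rw [hf_sum]
        exact Finset.sum_le_sum fun u hu => hf_le u (hfin.mem_toFinset.1 hu).1
    _ ≤ numZeros g r + 1 := by
        rw [Finset.sum_add_distrib, hg_sum, Finset.sum_ite_eq']
        split_ifs <;> omega

noncomputable def powerSeriesFn (a : ℕ → ℂ) (z : ℂ) : ℂ := ∑' k, a k * z ^ k

/-- The coefficients of `z ↦ (powerSeriesFn a z - powerSeriesFn a w) / (z - w)`. -/
noncomputable def slopeCoeff (a : ℕ → ℂ) (w : ℂ) (k : ℕ) : ℂ :=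
  powerSeriesFn (fun m => a (m + k + 1)) w

section BoundedCoeff

variable {a : ℕ → ℂ} {C : ℝ}

lemma summable_norm_coeff_mul_pow (ha : ∀ k, ‖a k‖ ≤ C) {z : ℂ} (hz : ‖z‖ < 1) :
    Summable fun k => ‖a k * z ^ k‖ := by
  refine .of_nonneg_of_le (fun _ => norm_nonneg _) (fun k => ?_)
    ((summable_geometric_of_lt_one (norm_nonneg z) hz).mul_left C)
  rw [norm_mul, norm_pow]
  exact mul_le_mul_of_nonneg_right (ha k) (by positivity)

lemma norm_powerSeriesFn_le (ha : ∀ k, ‖a k‖ ≤ C) {z : ℂ} (hz : ‖z‖ < 1) :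
    ‖powerSeriesFn a z‖ ≤ C / (1 - ‖z‖) := by
  have hgeom := summable_geometric_of_lt_one (norm_nonneg z) hz
  calc ‖powerSeriesFn a z‖ ≤ ∑' k, ‖a k * z ^ k‖ :=
        norm_tsum_le_tsum_norm (summable_norm_coeff_mul_pow ha hz)
    _ ≤ ∑' k, C * ‖z‖ ^ k := by
        refine (summable_norm_coeff_mul_pow ha hz).tsum_le_tsum (fun k => ?_) (hgeom.mul_left C)
        rw [norm_mul, norm_pow]
        exact mul_le_mul_of_nonneg_right (ha k) (by positivity)
    _ = C / (1 - ‖z‖) := by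
        rw [tsum_mul_left, tsum_geometric_of_lt_one (norm_nonneg z) hz, div_eq_mul_inv]

lemma hasSum_powerSeriesFn (ha : ∀ k, ‖a k‖ ≤ C) {z : ℂ} (hz : ‖z‖ < 1) :
    HasSum (fun k => a k * z ^ k) (powerSeriesFn a z) :=
  (summable_norm_coeff_mul_pow ha hz).of_norm.hasSum

lemma powerSeriesFn_eq_coeff_zero_add (ha : ∀ k, ‖a k‖ ≤ C) {z : ℂ} (hz : ‖z‖ < 1) :
    powerSeriesFn a z = a 0 + z * powerSeriesFn (fun k => a (k + 1)) z := by
  rw [powerSeriesFn, (hasSum_powerSeriesFn ha hz).summable.tsum_eq_zero_add, powerSeriesFn,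
    ← tsum_mul_left]
  simp only [pow_zero, mul_one, pow_succ]
  congr 1
  exact tsum_congr fun k => by ring

lemma analyticOnNhd_powerSeriesFn (ha : ∀ k, ‖a k‖ ≤ C) :
    AnalyticOnNhd ℂ (powerSeriesFn a) (ball 0 1) := by
  set p := FormalMultilinearSeries.ofScalars ℂ a
  have hp : ((1 : NNReal) : ENNReal) ≤ p.radius :=
    p.le_radius_of_bound C fun n => by
      simpa [p, FormalMultilinearSeries.ofScalars_norm] using ha n
  have hsum : p.sum = powerSeriesFn a := by
    funext z
    simp [p, FormalMultilinearSeries.sum, powerSeriesFn, mul_comm]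
  have hf := (p.hasFPowerSeriesOnBall (one_pos.trans_le hp)).mono one_pos hp
  rw [hsum] at hf
  intro z hz
  exact hf.analyticAt_of_mem (by simpa [← ofReal_norm] using hz)

lemma norm_slopeCoeff_le {w : ℂ} (hw : ‖w‖ < 1) {k : ℕ} {T : ℝ}
    (ha : ∀ m, ‖a (m + k + 1)‖ ≤ T) : ‖slopeCoeff a w k‖ ≤ T / (1 - ‖w‖) :=
  norm_powerSeriesFn_le ha hw

lemma coeff_succ_eq_slopeCoeff (ha : ∀ k, ‖a k‖ ≤ C) {w : ℂ} (hw : ‖w‖ < 1) (k : ℕ) :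
    a (k + 1) = slopeCoeff a w k - w * slopeCoeff a w (k + 1) := by
  have hshift : (fun m => a (m + 1 + k + 1)) = fun m => a (m + (k + 1) + 1) := by
    funext m
    congr 1
    omega
  rw [slopeCoeff, powerSeriesFn_eq_coeff_zero_add (fun m => ha _) hw, slopeCoeff]
  simp only [zero_add, hshift, add_sub_cancel_right]

lemma powerSeriesFn_eq_coeff_zero_add_slopeCoeff (ha : ∀ k, ‖a k‖ ≤ C) {w : ℂ}
    (hw : ‖w‖ < 1) : powerSeriesFn a w = a 0 + w * slopeCoeff a w 0 :=
  powerSeriesFn_eq_coeff_zero_add ha hw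

lemma powerSeriesFn_eq_sub_mul_slopeCoeff_add (ha : ∀ k, ‖a k‖ ≤ C) {w z : ℂ} (hw : ‖w‖ < 1)
    (hz : ‖z‖ < 1) :
    powerSeriesFn a z = (z - w) * powerSeriesFn (slopeCoeff a w) z + powerSeriesFn a w := by
  set b := slopeCoeff a w
  have hb : ∀ k, ‖b k‖ ≤ C / (1 - ‖w‖) := fun k => norm_slopeCoeff_le hw fun m => ha _
  have htail : powerSeriesFn (fun k => a (k + 1)) z =
      powerSeriesFn b z - w * powerSeriesFn (fun k => b (k + 1)) z := by
    refine (((hasSum_powerSeriesFn hb hz).sub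
      ((hasSum_powerSeriesFn (fun k => hb (k + 1)) hz).mul_left w)).congr_fun ?_).tsum_eq
    intro k
    simp only [coeff_succ_eq_slopeCoeff ha hw k]
    ring
  rw [powerSeriesFn_eq_coeff_zero_add ha hz, htail,
    powerSeriesFn_eq_coeff_zero_add_slopeCoeff ha hw, powerSeriesFn_eq_coeff_zero_add hb hz]
  ring

end BoundedCoeff

section TailBound

variable {a : ℕ → ℂ}

lemma norm_slopeCoeff_le_two_mul {w : ℂ} (hw : ‖w‖ ≤ 1 / 2) {n : ℕ} {T : ℝ}
    (ha : ∀ k > n, ‖a k‖ ≤ T) {k : ℕ} (hk : n ≤ k) : ‖slopeCoeff a w k‖ ≤ 2 * T := by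
  have hT : 0 ≤ T := (norm_nonneg _).trans (ha (n + 1) (Nat.lt_succ_self n))
  calc ‖slopeCoeff a w k‖ ≤ T / (1 - ‖w‖) :=
        norm_slopeCoeff_le (by linarith) fun m => ha _ (by omega)
    _ ≤ T / (1 / 2) := by gcongr; linarith
    _ = 2 * T := by ring

lemma exists_slopeCoeff_of_numZeros_ne_zero {r : ℝ} (hr : r ≤ 1 / 2) {n : ℕ} {T : ℝ}
    (ha : ∀ k > n, ‖a k‖ ≤ T) (h : numZeros (powerSeriesFn a) r ≠ 0) :
    ∃ w : ℂ, ‖w‖ ≤ r ∧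
      numZeros (powerSeriesFn a) r ≤ numZeros (powerSeriesFn (slopeCoeff a w)) r + 1 ∧
      (∀ k ≥ n, ‖slopeCoeff a w k‖ ≤ 2 * T) ∧
      a 0 = -(w * slopeCoeff a w 0) ∧
      ∀ k, a (k + 1) = slopeCoeff a w k - w * slopeCoeff a w (k + 1) := by
  obtain ⟨C, hC⟩ := exists_forall_norm_le_of_tail ha
  obtain ⟨w, hwr, hw0⟩ := exists_eq_zero_of_numZeros_ne_zero h
  rw [mem_closedBall_zero_iff] at hwr
  have hw : ‖w‖ < 1 := by linarith
  refine ⟨w, hwr, numZeros_le_numZeros_add_one (w := w) fun u hu => ?_,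
    fun k hk => norm_slopeCoeff_le_two_mul (hwr.trans hr) ha hk, ?_,
    coeff_succ_eq_slopeCoeff hC hw⟩
  · have hu : u ∈ ball (0 : ℂ) 1 := closedBall_subset_ball (by linarith) hu
    refine ⟨analyticOnNhd_powerSeriesFn (fun k => norm_slopeCoeff_le hw fun m => hC _) u hu, ?_⟩
    filter_upwards [isOpen_ball.mem_nhds hu] with z hz
    rw [powerSeriesFn_eq_sub_mul_slopeCoeff_add hC hw (mem_ball_zero_iff.1 hz), hw0, add_zero]
    rfl
  · have h0 := powerSeriesFn_eq_coeff_zero_add_slopeCoeff hC hw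
    rw [hw0] at h0
    linear_combination -h0

theorem norm_coeff_le_of_lt_numZeros {r : ℝ} (hr : r ≤ 1 / 2) (n : ℕ) {a : ℕ → ℂ} {T : ℝ}
    (ha : ∀ k > n, ‖a k‖ ≤ T) (hn : n < numZeros (powerSeriesFn a) r) :
    ∀ j ≤ n, ‖a j‖ ≤ 2 * T * r * 6 ^ n := by
  induction n generalizing a T with
  | zero =>
    obtain ⟨w, hwr, -, hb_tail, h0, hsucc⟩ :=
      exists_slopeCoeff_of_numZeros_ne_zero hr ha (by omega)
    intro j hj
    calc ‖a j‖ ≤ 0 + r * (2 * T) :=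
          norm_le_of_coeff_eq_sub_mul hwr le_rfl h0 hsucc (fun k => hb_tail k k.zero_le)
            (fun _ h => absurd h (Nat.not_lt_zero _)) j hj
      _ = 2 * T * r * 6 ^ 0 := by ring
  | succ n ih =>
    obtain ⟨w, hwr, hcount, hb_tail, h0, hsucc⟩ :=
      exists_slopeCoeff_of_numZeros_ne_zero hr ha (by omega)
    set b := slopeCoeff a w
    have hb_head : ∀ j ≤ n, ‖b j‖ ≤ 2 * (2 * T) * r * 6 ^ n := ih hb_tail (by omega)
    have hT : 0 ≤ T := (norm_nonneg _).trans (ha (n + 2) (by omega))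
    have hr0 : 0 ≤ r := (norm_nonneg w).trans hwr
    have h6 : 1 ≤ (6 : ℝ) ^ n := one_le_pow₀ (by norm_num)
    have hT6 : 0 ≤ T * 6 ^ n := by positivity
    have hb : ∀ k, ‖b k‖ ≤ 4 * T * 6 ^ n := fun k => by
      rcases le_or_gt k n with hk | hk
      · nlinarith [hb_head k hk]
      · nlinarith [hb_tail k hk]
    intro j hj
    calc ‖a j‖ ≤ 2 * (2 * T) * r * 6 ^ n + r * (4 * T * 6 ^ n) :=
          norm_le_of_coeff_eq_sub_mul hwr (by positivity) h0 hsucc hb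
            (fun j hj => hb_head j (by omega)) j hj
      _ ≤ 2 * T * r * 6 ^ (n + 1) := by
          rw [pow_succ]
          nlinarith [mul_nonneg hT6 hr0]

end TailBound

theorem zero_count_le_N_general
    (a : ℕ → ℂ)
    (N : ℕ) (B : ℝ) (hB : 0 < B)
    (hcoeff : ∀ k > N, ‖a k‖ ≤
      B * (Finset.range (N + 1)).sup' Finset.nonempty_range_add_one (fun j => ‖a j‖))
    (hne : ∃ j ≤ N, a j ≠ 0)
    (R₀ : ℝ) (hR₀ : R₀ = 1 / (B * 2 ^ (30 * N) + 1)) :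
    ∀ r : ℝ, 0 < r → r < R₀ / 2 →
      numZeros (fun z => ∑' k : ℕ, a k * z ^ k) r ≤ N := by
  intro r hr0 hr
  set M := (Finset.range (N + 1)).sup' Finset.nonempty_range_add_one (fun j => ‖a j‖)
  have hM : 0 < M := by
    obtain ⟨j, hj, hja⟩ := hne
    exact (norm_pos_iff.2 hja).trans_le
      (Finset.le_sup' (fun j => ‖a j‖) (Finset.mem_range.2 (Nat.lt_succ_of_le hj)))
  obtain ⟨j₀, hj₀, hMj₀⟩ : ∃ j ∈ Finset.range (N + 1), M = ‖a j‖ :=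
    Finset.exists_mem_eq_sup' Finset.nonempty_range_add_one (fun j => ‖a j‖)
  have hrB : 2 * r * (B * 2 ^ (30 * N) + 1) < 1 := by
    rw [hR₀, div_div, lt_div_iff₀ (by positivity)] at hr
    linarith
  have h6 : (6 : ℝ) ^ N ≤ 2 ^ (30 * N) := by
    rw [pow_mul]
    exact pow_le_pow_left₀ (by norm_num) (by norm_num) N
  have hr2 : r ≤ 1 / 2 := by
    linarith [mul_nonneg hr0.le (by positivity : (0 : ℝ) ≤ B * 2 ^ (30 * N))]
  by_contra! hcount
  have hMle : M ≤ 2 * (B * M) * r * 6 ^ N := hMj₀.trans_le <|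
    norm_coeff_le_of_lt_numZeros hr2 N hcoeff hcount j₀
      (Nat.le_of_lt_succ (Finset.mem_range.1 hj₀))
  have hsmall : 2 * B * r * 6 ^ N < 1 :=
    calc 2 * B * r * 6 ^ N ≤ 2 * B * r * 2 ^ (30 * N) := by gcongr
      _ < 1 := by linarith
  linarith [mul_lt_mul_of_pos_left hsmall hM]

/-- **Zero bound**: with `R₀ = 1/(B⋅2^{30N}+1)`, for every `0 < r < R₀/2` the function `f` has
at most `N` zeros, counted with multiplicities, in the closed disk `|z| ≤ r`. -/
theorem zero_count_le_N
    (a : ℕ → ℂ)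
    (hconv : ∀ z ∈ ball (0 : ℂ) 1, Summable fun k : ℕ => a k * z ^ k)
    (N : ℕ) (B : ℝ) (hB : 0 < B)
    (hcoeff : ∀ k > N, ‖a k‖ ≤
      B * (Finset.range (N + 1)).sup' Finset.nonempty_range_add_one (fun j => ‖a j‖))
    (hne : ∃ j ≤ N, a j ≠ 0)
    (R₀ : ℝ) (hR₀ : R₀ = 1 / (B * 2 ^ (30 * N) + 1)) :
    ∀ r : ℝ, 0 < r → r < R₀ / 2 →
      numZeros (fun z => ∑' k : ℕ, a k * z ^ k) r ≤ N :=
  zero_count_le_N_general a N B hB hcoeff hne R₀ hR₀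
end

section
/- Let f be holomorphic on an open neighborhood of 0 ∈ ℂ, not identically zero near 0, and let μ be the order of vanishing of f at 0 (so f(z) = z^μ·g(z) with g holomorphic near 0 and g(0) ≠ 0). Then lim_{R→0⁺} ( log sup_{|z| ≤ R} |f(z)| − log sup_{|z| ≤ R/e} |f(z)| ) = μ. -/
/-!
Write `M(R)` for the maximum of `|f|` on the closed disc of radius `R`. Since
`|f(z)| = |z|^μ |g(z)|` and `g` is continuous with `g 0 ≠ 0`, the quantity `M(R) / R^μ` is
squeezed between `|g(R)|` and `sup_{|z| ≤ R} |g(z)|`, so it tends to `|g 0| > 0`. Hence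
`log M(R) = μ log R + log |g 0| + o(1)`, and the difference at `R` and `R/e` tends to
`μ (log R - log (R/e)) = μ`.
-/

open Filter Topology Metric

theorem tendsto_div_const_nhdsGT_zero {a : ℝ} (ha : 0 < a) :
    Tendsto (fun R : ℝ => R / a) (𝓝[>] 0) (𝓝[>] 0) := by
  simpa only [div_eq_inv_mul] using
    tendsto_iff_comap.2 (comap_mulLeft_nhdsGT_zero (inv_pos.2 ha)).ge

theorem tendsto_log_sub_log_div_of_tendsto_div_pow {M : ℝ → ℝ} {μ : ℕ} {c a : ℝ}
    (hc : 0 < c) (ha : 0 < a) (hM : Tendsto (fun R => M R / R ^ μ) (𝓝[>] 0) (𝓝 c)) :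
    Tendsto (fun R => Real.log (M R) - Real.log (M (R / a))) (𝓝[>] 0)
      (𝓝 (μ * Real.log a)) := by
  have hMa := hM.comp (tendsto_div_const_nhdsGT_zero ha)
  have hlog := (Real.continuousAt_log hc.ne').tendsto
  have hdiff := ((hlog.comp hM).sub (hlog.comp hMa)).add_const (μ * Real.log a)
  rw [sub_self, zero_add] at hdiff
  refine hdiff.congr' ?_
  filter_upwards [self_mem_nhdsWithin, hM.eventually_ne hc.ne', hMa.eventually_ne hc.ne']
    with R (hR : 0 < R) hMR hMRa
  have hRa : 0 < R / a := div_pos hR ha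
  have hMR0 : M R ≠ 0 := fun h => hMR (by simp [h])
  have hMRa0 : M (R / a) ≠ 0 := fun h => hMRa (by simp [h])
  simp only [Function.comp_apply]
  rw [Real.log_div hMR0 (pow_pos hR μ).ne', Real.log_div hMRa0 (pow_pos hRa μ).ne',
    Real.log_pow, Real.log_pow, Real.log_div hR.ne' ha.ne']
  ring

theorem eventually_nhdsGT_forall_closedBall {X : Type*} [PseudoMetricSpace X] {x : X}
    {P : X → Prop} (h : ∀ᶠ z in 𝓝 x, P z) :
    ∀ᶠ R in 𝓝[>] (0 : ℝ), ∀ z ∈ closedBall x R, P z := by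
  obtain ⟨δ, hδ, hball⟩ := eventually_nhds_iff_ball.1 h
  filter_upwards [Ioo_mem_nhdsGT hδ] with R hR z hz
  exact hball z (closedBall_subset_ball hR.2 hz)

noncomputable def maxModulus (f : ℂ → ℂ) (R : ℝ) : ℝ :=
  sSup ((fun z => ‖f z‖) '' closedBall 0 R)

section maxModulus

variable {f g : ℂ → ℂ} {R C : ℝ}

theorem maxModulus_le (hR : 0 ≤ R) (h : ∀ z ∈ closedBall 0 R, ‖f z‖ ≤ C) :
    maxModulus f R ≤ C :=
  csSup_le (nonempty_closedBall.2 hR |>.image _) (Set.forall_mem_image.2 h)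

theorem norm_le_maxModulus (h : ∀ z ∈ closedBall 0 R, ‖f z‖ ≤ C) {z : ℂ}
    (hz : z ∈ closedBall 0 R) : ‖f z‖ ≤ maxModulus f R :=
  le_csSup ⟨C, Set.forall_mem_image.2 h⟩ (Set.mem_image_of_mem _ hz)

theorem eventually_maxModulus_le {μ : ℕ} (hfac : ∀ᶠ z in 𝓝 0, f z = z ^ μ * g z)
    (hg : ContinuousAt g 0) {b : ℝ} (hb : ‖g 0‖ < b) :
    ∀ᶠ R in 𝓝[>] (0 : ℝ), ∀ z ∈ closedBall 0 R, ‖f z‖ ≤ R ^ μ * b := by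
  have hgb : ∀ᶠ z in 𝓝 0, ‖g z‖ < b := hg.norm.eventually (eventually_lt_nhds hb)
  filter_upwards [self_mem_nhdsWithin, eventually_nhdsGT_forall_closedBall (hfac.and hgb)]
    with R (hR : 0 < R) hball z hz
  obtain ⟨hfz, hgz⟩ := hball z hz
  rw [hfz, norm_mul, norm_pow]
  exact mul_le_mul (pow_le_pow_left₀ (norm_nonneg z) (mem_closedBall_zero_iff.1 hz) μ)
    hgz.le (norm_nonneg _) (by positivity)

theorem tendsto_maxModulus_div_pow {μ : ℕ} (hfac : ∀ᶠ z in 𝓝 0, f z = z ^ μ * g z)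
    (hg : ContinuousAt g 0) :
    Tendsto (fun R => maxModulus f R / R ^ μ) (𝓝[>] 0) (𝓝 ‖g 0‖) := by
  refine tendsto_order.2 ⟨fun a ha => ?_, fun b hb => ?_⟩
  · have hgR : Tendsto (fun R : ℝ => ‖g R‖) (𝓝[>] 0) (𝓝 ‖g 0‖) := by
      have := (hg.norm.comp_of_eq Complex.continuous_ofReal.continuousAt Complex.ofReal_zero)
      exact this.tendsto.mono_left nhdsWithin_le_nhds
    filter_upwards [self_mem_nhdsWithin, hgR.eventually (eventually_gt_nhds ha),
      eventually_maxModulus_le hfac hg (lt_add_one ‖g 0‖),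
      eventually_nhdsGT_forall_closedBall hfac]
      with R (hR : 0 < R) hga hbound hfR
    have hRmem : (R : ℂ) ∈ closedBall 0 R := by simp [abs_of_pos hR]
    have hle := norm_le_maxModulus hbound hRmem
    rw [hfR _ hRmem, norm_mul, norm_pow, Complex.norm_real, Real.norm_of_nonneg hR.le] at hle
    rw [lt_div_iff₀ (pow_pos hR μ)]
    calc a * R ^ μ < ‖g R‖ * R ^ μ := mul_lt_mul_of_pos_right hga (pow_pos hR μ)
      _ ≤ maxModulus f R := by rwa [mul_comm]
  · obtain ⟨b', hb', hb'b⟩ := exists_between hb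
    filter_upwards [self_mem_nhdsWithin, eventually_maxModulus_le hfac hg hb']
      with R (hR : 0 < R) hbound
    rw [div_lt_iff₀ (pow_pos hR μ)]
    calc maxModulus f R ≤ R ^ μ * b' := maxModulus_le hR.le hbound
      _ < b * R ^ μ := by rw [mul_comm]; exact mul_lt_mul_of_pos_right hb'b (pow_pos hR μ)

end maxModulus

theorem log_sup_ratio_tendsto_order_general
    (s : Set ℂ) (hs : IsOpen s) (h0 : (0 : ℂ) ∈ s)
    (f g : ℂ → ℂ) (hg : DifferentiableOn ℂ g s)
    (μ : ℕ) (hfac : ∀ z ∈ s, f z = z ^ μ * g z) (hg0 : g 0 ≠ 0) :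
    Tendsto
      (fun R : ℝ =>
        Real.log (sSup ((fun z => ‖f z‖) '' closedBall (0 : ℂ) R)) -
          Real.log (sSup ((fun z => ‖f z‖) ''
            closedBall (0 : ℂ) (R / Real.exp 1))))
      (𝓝[>] (0 : ℝ)) (𝓝 (μ : ℝ)) := by
  have hs0 : s ∈ 𝓝 0 := hs.mem_nhds h0
  have hM := tendsto_maxModulus_div_pow (eventually_of_mem hs0 hfac)
    (hg.continuousOn.continuousAt hs0)
  simpa [maxModulus] using
    tendsto_log_sub_log_div_of_tendsto_div_pow (norm_pos_iff.2 hg0) (Real.exp_pos 1) hM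

/-- If `f` vanishes to order `μ` at `0` then
`log sup_{|z|≤R}|f| − log sup_{|z|≤R/e}|f| → μ` as `R → 0⁺`. -/
theorem log_sup_ratio_tendsto_order
    (s : Set ℂ) (hs : IsOpen s) (h0 : (0 : ℂ) ∈ s)
    (f g : ℂ → ℂ) (hf : DifferentiableOn ℂ f s) (hg : DifferentiableOn ℂ g s)
    (μ : ℕ) (hfac : ∀ z ∈ s, f z = z ^ μ * g z) (hg0 : g 0 ≠ 0) :
    Tendsto
      (fun R : ℝ =>
        Real.log (sSup ((fun z => ‖f z‖) '' closedBall (0 : ℂ) R)) -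
          Real.log (sSup ((fun z => ‖f z‖) ''
            closedBall (0 : ℂ) (R / Real.exp 1))))
      (𝓝[>] (0 : ℝ)) (𝓝 (μ : ℝ)) :=
  log_sup_ratio_tendsto_order_general s hs h0 f g hg μ hfac hg0
end

section
/- Let W ⊂ ℂⁿ be open, K ⊂ W compact, γ ∈ ℕⁿ a multi-index, and h a holomorphic nowhere-vanishing function on W. Then there exists a constant C > 0 such that for every holomorphic function g on W with sup_{w∈W} |g(w)·w^γ| < ∞ and every z ∈ K, |g(z)·z^γ| ≤ C · sup_{w∈W} |g(w)·w^γ| · |h(z)·z^γ|. -/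
open Metric Function

/-! Since `‖h‖` is bounded below on `K`, it suffices to bound `‖g‖` on `K` by a multiple of
`M = sup_W ‖g(w) w^γ‖`. Balls in `Fin n → ℂ` are polydiscs, and one of a fixed radius `r` around
each point of `K` lies in `W`. In one variable, `‖F(ζ) ζ^m‖ ≤ M` on the disc of radius `r`
around `c` gives `‖F(c)‖ ≤ M (4/r)^m` by the maximum modulus principle on a smaller disc
containing `c` whose boundary avoids `‖ζ‖ < r/4`. Freezing the coordinates one at a time then
gives `‖g(z)‖ ≤ M (4/r)^|γ|`. -/

theorem Complex.norm_le_of_norm_mul_pow_le {F : ℂ → ℂ} {c : ℂ} {r M : ℝ} (m : ℕ) (hr : 0 < r)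
    (hF : DifferentiableOn ℂ F (closedBall c r))
    (hb : ∀ ζ ∈ closedBall c r, ‖F ζ * ζ ^ m‖ ≤ M) :
    ‖F c‖ ≤ M * (4 / r) ^ m := by
  have hfar : ∀ ζ ∈ closedBall c r, r / 4 ≤ ‖ζ‖ → ‖F ζ‖ ≤ M * (4 / r) ^ m := fun ζ hζ hζr =>
    calc ‖F ζ‖ = ‖F ζ‖ * (r / 4) ^ m * (4 / r) ^ m := by
          rw [mul_assoc, ← mul_pow, div_mul_div_comm, mul_comm r, div_self (by positivity),
            one_pow, mul_one]
      _ ≤ ‖F ζ * ζ ^ m‖ * (4 / r) ^ m := by rw [norm_mul, norm_pow]; gcongr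
      _ ≤ M * (4 / r) ^ m := by gcongr; exact hb ζ hζ
  -- maximum modulus on a disc through `c` whose boundary stays away from the origin
  have hdisc : ∀ a ρ, 0 < ρ → closedBall a ρ ⊆ closedBall c r → c ∈ closedBall a ρ →
      (∀ ζ ∈ sphere a ρ, r / 4 ≤ ‖ζ‖) → ‖F c‖ ≤ M * (4 / r) ^ m := by
    intro a ρ hρ hsub hc hsphere
    refine Complex.norm_le_of_forall_mem_frontier_norm_le isBounded_ball
      (hF.diffContOnCl_ball hsub) (fun ζ hζ => ?_) (by rwa [closure_ball a hρ.ne'])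
    rw [frontier_ball a hρ.ne'] at hζ
    exact hfar ζ (hsub (sphere_subset_closedBall hζ)) (hsphere ζ hζ)
  rcases lt_or_ge ‖c‖ (r / 2) with hc | hc
  · refine hdisc 0 (r / 2) (by positivity) (fun ζ hζ => ?_) ?_ fun ζ hζ => ?_
    · rw [mem_closedBall_zero_iff] at hζ
      rw [mem_closedBall, dist_eq_norm]
      linarith [norm_sub_le ζ c]
    · simpa using hc.le
    · rw [mem_sphere_zero_iff_norm.1 hζ]; linarith
  · refine hdisc c (r / 4) (by positivity) (closedBall_subset_closedBall (by linarith))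
      (mem_closedBall_self (by positivity)) fun ζ hζ => ?_
    rw [mem_sphere_iff_norm] at hζ
    linarith [norm_sub_norm_le c ζ, norm_sub_rev c ζ]

theorem update_mem_closedBall {ι : Type*} [Fintype ι] [DecidableEq ι] {X : ι → Type*}
    [∀ i, PseudoMetricSpace (X i)] {z w : ∀ i, X i} {r : ℝ} (hw : w ∈ closedBall z r) {j : ι}
    {ζ : X j} (hζ : ζ ∈ closedBall (z j) r) :
    update w j ζ ∈ closedBall z r := by
  have hr : 0 ≤ r := dist_nonneg.trans hζ
  rw [closedBall_pi z hr] at hw ⊢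
  exact (Set.update_mem_pi_iff_of_mem hw).2 fun _ => hζ

theorem norm_le_of_norm_mul_prod_pow_le {ι : Type*} [Fintype ι] [DecidableEq ι] (γ : ι → ℕ)
    (s : Finset ι) {F : (ι → ℂ) → ℂ} {z : ι → ℂ} {r M : ℝ} (hr : 0 < r)
    (hF : DifferentiableOn ℂ F (closedBall z r))
    (hb : ∀ w ∈ closedBall z r, ‖F w * ∏ i ∈ s, w i ^ γ i‖ ≤ M) :
    ‖F z‖ ≤ M * (4 / r) ^ ∑ i ∈ s, γ i := by
  induction s using Finset.induction_on generalizing F M with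
  | empty => simpa using hb z (mem_closedBall_self hr.le)
  | insert j s hj ih =>
    -- freezing the `j`-th coordinate at `z j` costs a factor `(4 / r) ^ γ j` in the bound
    have hupdate : ∀ (w : ι → ℂ) (ζ : ℂ),
        ∏ i ∈ s, update w j ζ i ^ γ i = ∏ i ∈ s, w i ^ γ i := fun w ζ =>
      Finset.prod_congr rfl fun i hi => by rw [update_of_ne (ne_of_mem_of_not_mem hi hj)]
    have hfreeze : Differentiable ℂ fun w : ι → ℂ => update w j (z j) := by
      refine differentiable_pi'' fun i => ?_
      rcases eq_or_ne i j with rfl | hi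
      · simp
      · simpa [hi] using differentiable_apply i
    have hG : DifferentiableOn ℂ (fun w => F (update w j (z j))) (closedBall z r) :=
      hF.comp hfreeze.differentiableOn fun w hw =>
        update_mem_closedBall hw (mem_closedBall_self hr.le)
    have hGb : ∀ w ∈ closedBall z r,
        ‖F (update w j (z j)) * ∏ i ∈ s, w i ^ γ i‖ ≤ M * (4 / r) ^ γ j := by
      intro w hw
      refine Complex.norm_le_of_norm_mul_pow_le (F := fun ζ => F (update w j ζ) * _) (γ j) hr
        ((hF.comp (fun y _ => (hasFDerivAt_update w y).differentiableAt.differentiableWithinAt)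
          fun ζ hζ => update_mem_closedBall hw hζ).mul_const _) fun ζ hζ => ?_
      have := hb _ (update_mem_closedBall hw hζ)
      rw [Finset.prod_insert hj, update_self, hupdate] at this
      convert this using 2
      ring
    calc ‖F z‖ = ‖F (update z j (z j))‖ := by rw [update_eq_self]
      _ ≤ M * (4 / r) ^ γ j * (4 / r) ^ ∑ i ∈ s, γ i := ih hG hGb
      _ = M * (4 / r) ^ ∑ i ∈ insert j s, γ i := by rw [Finset.sum_insert hj, pow_add, mul_assoc]

/-- **Monomial-weighted Schwarz-type bound on a compact** (the key estimate in Lemma 2.1): for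
`W` open, `K ⊆ W` compact, `γ` a multi-index and `h` a nowhere-vanishing holomorphic function
on `W`, there is `C > 0` such that every holomorphic `g` on `W` with
`sup_W |g(w) w^γ| < ∞` satisfies `|g(z) z^γ| ≤ C ⋅ sup_W |g(w) w^γ| ⋅ |h(z) z^γ|` on `K`. -/
theorem monomial_weighted_bound_on_compact {n : ℕ}
    (W : Set (Fin n → ℂ)) (hW : IsOpen W)
    (K : Set (Fin n → ℂ)) (hK : IsCompact K) (hKW : K ⊆ W)
    (γ : Fin n → ℕ)
    (h : (Fin n → ℂ) → ℂ) (hh : DifferentiableOn ℂ h W) (hne : ∀ z ∈ W, h z ≠ 0) :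
    ∃ C : ℝ, 0 < C ∧ ∀ g : (Fin n → ℂ) → ℂ, DifferentiableOn ℂ g W →
      BddAbove ((fun w => ‖g w * ∏ i, w i ^ γ i‖) '' W) →
      ∀ z ∈ K,
        ‖g z * ∏ i, z i ^ γ i‖ ≤
          C * sSup ((fun w => ‖g w * ∏ i, w i ^ γ i‖) '' W) *
            ‖h z * ∏ i, z i ^ γ i‖ := by
  obtain ⟨r, hr, hrW⟩ := hK.exists_cthickening_subset_open hW hKW
  have hball : ∀ z ∈ K, closedBall z r ⊆ W := fun z hz =>
    (closedBall_subset_cthickening hz r).trans hrW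
  obtain ⟨δ, hδ, hδh⟩ := hK.exists_forall_le' (hh.continuousOn.mono hKW).norm
    fun z hz => norm_pos_iff.2 (hne z (hKW hz))
  refine ⟨(4 / r) ^ (∑ i, γ i) / δ, by positivity, fun g hg hbdd z hz => ?_⟩
  set M := sSup ((fun w => ‖g w * ∏ i, w i ^ γ i‖) '' W)
  have hgz : ‖g z‖ ≤ M * (4 / r) ^ (∑ i, γ i) :=
    norm_le_of_norm_mul_prod_pow_le γ Finset.univ hr (hg.mono (hball z hz)) fun w hw =>
      le_csSup hbdd ⟨w, hball z hz hw, rfl⟩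
  calc ‖g z * ∏ i, z i ^ γ i‖ = ‖g z‖ * ‖∏ i, z i ^ γ i‖ := norm_mul _ _
    _ ≤ M * (4 / r) ^ (∑ i, γ i) * (‖h z‖ / δ) * ‖∏ i, z i ^ γ i‖ := by
      gcongr
      exact hgz.trans (le_mul_of_one_le_right ((norm_nonneg _).trans hgz)
        ((one_le_div hδ).2 (hδh z hz)))
    _ = (4 / r) ^ (∑ i, γ i) / δ * M * ‖h z * ∏ i, z i ^ γ i‖ := by rw [norm_mul]; ring
end
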